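/- arXiv:2206.12116 — 2 statements merged into one kernel-verified Lean document; each statement's English description precedes it below -/
import Mathlib

section
/- The closed-form tree quantity Σ_e w_e |μ(Γ(v_e)) − ν(Γ(v_e))| equals the optimal transport cost between μ and ν with the tree shortest-path metric d_T as ground cost: W_T(μ, ν) = min over couplings Π of Σᵢⱼ πᵢⱼ d_T(xᵢ, xⱼ). -/
/-- A finite rooted tree on `Fin N`, given by a parent function, with a nonnegative
weight on the edge connecting each node to its parent. -/
structure WTree (N : ℕ) where
  parent : Fin N → Fin N
  root : Fin N
  w : Fin N → ℝ
  hw : ∀ k, 0 ≤ w k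
  parent_root : parent root = root
  depth : Fin N → ℕ
  depth_root : depth root = 0
  depth_parent : ∀ v, v ≠ root → depth v = depth (parent v) + 1
  root_unique : ∀ v, depth v = 0 → v = root

/-- `T.anc i k` : node `k` is an ancestor of node `i` (including `i` itself). -/
def WTree.anc {N : ℕ} (T : WTree N) (i k : Fin N) : Prop :=
  ∃ m : ℕ, T.parent^[m] i = k

/-- A leaf is a node with no children. -/
def WTree.IsLeaf {N : ℕ} (T : WTree N) (i : Fin N) : Prop :=
  ∀ v, T.parent v = i → v = i

open Classical in
/-- The 0/1 ancestor-indicator vector `bᵢ` of node `i`. -/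
noncomputable def WTree.bvec {N : ℕ} (T : WTree N) (i : Fin N) : Fin N → ℝ :=
  fun k => if T.anc i k then 1 else 0

open Classical in
/-- The (unique-path) shortest-path distance on the weighted tree: the sum of the
weights of the edges on the path between `i` and `j`, i.e. the sum of weights over
the symmetric difference of the ancestor sets. -/
noncomputable def WTree.dist {N : ℕ} (T : WTree N) (i j : Fin N) : ℝ :=
  ∑ k, if (T.anc i k ∧ ¬ T.anc j k) ∨ (T.anc j k ∧ ¬ T.anc i k) then T.w k else 0
/-- `π` is a coupling of the mass vectors `a` and `b`. -/
def IsCoupling {n m : ℕ} (π : Fin n → Fin m → ℝ) (a : Fin n → ℝ) (b : Fin m → ℝ) : Prop :=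
  (∀ i j, 0 ≤ π i j) ∧ (∀ i, ∑ j, π i j = a i) ∧ (∀ j, ∑ i, π i j = b j)

/-- Transport cost of a plan `π` with respect to the cost `c`. -/
noncomputable def otCost {n m : ℕ} (π : Fin n → Fin m → ℝ) (c : Fin n → Fin m → ℝ) : ℝ :=
  ∑ i, ∑ j, π i j * c i j

/-- `a` is a probability vector. -/
def IsProbVec {n : ℕ} (a : Fin n → ℝ) : Prop :=
  (∀ i, 0 ≤ a i) ∧ ∑ i, a i = 1

open Classical in
/-- `μ(Γ(v_k))`: total mass of the subtree rooted at node `k`. -/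
noncomputable def WTree.mass {N L : ℕ} (T : WTree N) (ℓ : Fin L → Fin N)
    (a : Fin L → ℝ) (k : Fin N) : ℝ :=
  ∑ i, if T.anc (ℓ i) k then a i else 0

/-!
Write `χₖ` for the indicator of the leaves below node `k`, so that `d(p, q) = Σₖ wₖ |χₖ p − χₖ q|`
and `μ(Γₖ) − ν(Γₖ) = Σ_{p,q} π p q (χₖ p − χₖ q)` for every coupling `π`; the triangle inequality
then bounds the closed form by the cost of any coupling.

For the reverse inequality we build a coupling greedily. Take a surplus leaf `i` and a deficit leaf
`j` below a deepest node whose subtree contains both a surplus and a deficit leaf. Every edge above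
`i` but not above `j` has only surplus leaves below it, so its imbalance is at least `a i - b i`;
symmetrically on `j`'s side. Shipping `δ = min (a i - b i) (b j - a j)` from `i` to `j` therefore
lowers the closed form by exactly `δ · d(i, j)`, and balances `i` or `j`.
-/

open Finset

section
variable {n m : ℕ}

lemma isCoupling_diag {a : Fin n → ℝ} (ha : ∀ i, 0 ≤ a i) :
    IsCoupling (fun p => Pi.single p (a p)) a a := by
  refine ⟨fun p q => ?_, fun p => ?_, fun q => ?_⟩
  · simp only [Pi.single_apply]; split_ifs <;> simp [ha]
  · simp
  · simp [Finset.sum_pi_single]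

lemma otCost_diag_eq_zero {a : Fin n → ℝ} {c : Fin n → Fin n → ℝ} (hc : ∀ p, c p p = 0) :
    otCost (fun p => Pi.single p (a p)) c = 0 := by
  simp [otCost, Pi.single_apply, hc]

lemma otCost_add_single (π : Fin n → Fin m → ℝ) (c : Fin n → Fin m → ℝ) (i : Fin n) (j : Fin m)
    (δ : ℝ) : otCost (π + Pi.single i (Pi.single j δ)) c = otCost π c + δ * c i j := by
  simp [otCost, add_mul, Finset.sum_add_distrib, Pi.single_apply, ite_apply]

lemma IsCoupling.add_single {π : Fin n → Fin m → ℝ} {a : Fin n → ℝ} {b : Fin m → ℝ}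
    {i : Fin n} {j : Fin m} {δ : ℝ} (h : IsCoupling π (a - Pi.single i δ) (b - Pi.single j δ))
    (hδ : 0 ≤ δ) : IsCoupling (π + Pi.single i (Pi.single j δ)) a b := by
  obtain ⟨hpos, hrow, hcol⟩ := h
  refine ⟨fun p q => ?_, fun p => ?_, fun q => ?_⟩
  · simp only [Pi.add_apply, Pi.single_apply, ite_apply, Pi.zero_apply]
    have := hpos p q
    split_ifs <;> linarith
  · simp [Finset.sum_add_distrib, hrow, Pi.single_apply, ite_apply]
  · simp [Finset.sum_add_distrib, hcol, Pi.single_apply, ite_apply]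

lemma abs_sum_sub_sum_le_otCost {π : Fin n → Fin m → ℝ} {a : Fin n → ℝ} {b : Fin m → ℝ}
    (h : IsCoupling π a b) (f : Fin n → ℝ) (g : Fin m → ℝ) :
    |∑ p, a p * f p - ∑ q, b q * g q| ≤ otCost π (fun p q => |f p - g q|) := by
  obtain ⟨hpos, hrow, hcol⟩ := h
  have hsplit : ∑ p, a p * f p - ∑ q, b q * g q = ∑ p, ∑ q, π p q * (f p - g q) := by
    simp only [← hrow, ← hcol, mul_sub, Finset.sum_sub_distrib, Finset.sum_mul]
    rw [Finset.sum_comm (f := fun q p => π p q * g q)]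
  rw [hsplit]
  refine (Finset.abs_sum_le_sum_abs _ _).trans (Finset.sum_le_sum fun p _ => ?_)
  refine (Finset.abs_sum_le_sum_abs _ _).trans_eq (Finset.sum_congr rfl fun q _ => ?_)
  rw [abs_mul, abs_of_nonneg (hpos p q)]

lemma exists_lt_of_sum_eq_of_ne {a b : Fin n → ℝ} (hsum : ∑ l, a l = ∑ l, b l) (hne : a ≠ b) :
    ∃ i, b i < a i := by
  by_contra! h
  exact hne (funext fun l =>
    (Finset.sum_eq_sum_iff_of_le fun l _ => h l).1 hsum l (Finset.mem_univ l))

lemma card_filter_ne_sub_single_lt {a b : Fin n → ℝ} {i j : Fin n} {δ : ℝ}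
    (hi : b i < a i) (hj : a j < b j) (hδ : δ = a i - b i ∨ δ = b j - a j) :
    #{l | (a - Pi.single i δ : Fin n → ℝ) l ≠ (b - Pi.single j δ : Fin n → ℝ) l} <
      #{l | a l ≠ b l} := by
  have hij : i ≠ j := by rintro rfl; linarith
  refine Finset.card_lt_card ((Finset.ssubset_iff_of_subset fun l => ?_).2 ?_)
  · simp only [Finset.mem_filter, Finset.mem_univ, true_and, Pi.sub_apply, Pi.single_apply]
    intro hl
    by_cases hli : l = i
    · subst hli; exact hi.ne'
    by_cases hlj : l = j
    · subst hlj; exact hj.ne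
    simpa [hli, hlj] using hl
  · rcases hδ with rfl | rfl
    · exact ⟨i, by simp [hi.ne', hij]⟩
    · exact ⟨j, by simp [hj.ne, hij.symm]⟩

theorem exists_isCoupling_otCost_eq {c : Fin n → Fin n → ℝ} (hc : ∀ p, c p p = 0)
    {F : (Fin n → ℝ) → (Fin n → ℝ) → ℝ} (hF : ∀ a, F a a = 0)
    (hstep : ∀ a b : Fin n → ℝ, (∃ i, b i < a i) → (∃ j, a j < b j) →
      ∃ i j, b i < a i ∧ a j < b j ∧ ∀ δ ≤ a i - b i, δ ≤ b j - a j →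
        F (a - Pi.single i δ) (b - Pi.single j δ) = F a b - δ * c i j)
    {a b : Fin n → ℝ} (ha : ∀ l, 0 ≤ a l) (hb : ∀ l, 0 ≤ b l) (hsum : ∑ l, a l = ∑ l, b l) :
    ∃ π, IsCoupling π a b ∧ otCost π c = F a b := by
  induction hk : #{l | a l ≠ b l} using Nat.strong_induction_on generalizing a b with
  | _ k ih =>
  by_cases hab : a = b
  · subst hab
    exact ⟨_, isCoupling_diag ha, by rw [otCost_diag_eq_zero hc, hF]⟩
  obtain ⟨i, j, hi, hj, hFstep⟩ := hstep a b (exists_lt_of_sum_eq_of_ne hsum hab)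
    (exists_lt_of_sum_eq_of_ne hsum.symm (Ne.symm hab))
  set δ := min (a i - b i) (b j - a j)
  have hδi : δ ≤ a i - b i := min_le_left _ _
  have hδj : δ ≤ b j - a j := min_le_right _ _
  have ha' : ∀ l, 0 ≤ (a - Pi.single i δ : Fin n → ℝ) l := fun l => by
    by_cases hl : l = i
    · subst hl; simp; linarith [hb l]
    · simpa [hl] using ha l
  have hb' : ∀ l, 0 ≤ (b - Pi.single j δ : Fin n → ℝ) l := fun l => by
    by_cases hl : l = j
    · subst hl; simp; linarith [ha l]
    · simpa [hl] using hb l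
  have hsum' :
      ∑ l, (a - Pi.single i δ : Fin n → ℝ) l = ∑ l, (b - Pi.single j δ : Fin n → ℝ) l := by
    simp [Finset.sum_sub_distrib, hsum]
  obtain ⟨π, hπ, hcost⟩ := ih _ (hk ▸ card_filter_ne_sub_single_lt hi hj (min_choice _ _))
    ha' hb' hsum' rfl
  refine ⟨_, hπ.add_single (by positivity), ?_⟩
  rw [otCost_add_single, hcost, hFstep δ hδi hδj]
  ring

end

namespace WTree
variable {N : ℕ} (T : WTree N)

lemma anc_refl (i : Fin N) : T.anc i i := ⟨0, rfl⟩

lemma anc_trans {i k v : Fin N} (hik : T.anc i k) (hkv : T.anc k v) : T.anc i v := by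
  obtain ⟨m, rfl⟩ := hik
  obtain ⟨m', rfl⟩ := hkv
  exact ⟨m' + m, Function.iterate_add_apply _ _ _ _⟩

lemma anc_total {i k v : Fin N} (hk : T.anc i k) (hv : T.anc i v) : T.anc k v ∨ T.anc v k := by
  obtain ⟨m, rfl⟩ := hk
  obtain ⟨m', rfl⟩ := hv
  rcases le_total m m' with h | h
  · exact .inl ⟨m' - m, by rw [← Function.iterate_add_apply, Nat.sub_add_cancel h]⟩
  · exact .inr ⟨m - m', by rw [← Function.iterate_add_apply, Nat.sub_add_cancel h]⟩

lemma anc_root (i : Fin N) : T.anc i T.root := by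
  refine ⟨T.depth i, ?_⟩
  induction hd : T.depth i generalizing i with
  | zero => exact T.root_unique i hd
  | succ d ih =>
    have hi : i ≠ T.root := by rintro rfl; simp [T.depth_root] at hd
    rw [Function.iterate_succ_apply]
    exact ih _ (by have := T.depth_parent i hi; omega)

lemma depth_parent_le (v : Fin N) : T.depth (T.parent v) ≤ T.depth v := by
  by_cases hv : v = T.root
  · rw [hv, T.parent_root]
  · rw [T.depth_parent v hv]; omega

lemma depth_iterate_parent_le (t : ℕ) (v : Fin N) : T.depth (T.parent^[t] v) ≤ T.depth v := by
  induction t with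
  | zero => rfl
  | succ t ih =>
    rw [Function.iterate_succ_apply']
    exact (T.depth_parent_le _).trans ih

lemma eq_of_anc_of_depth_le {k v : Fin N} (hkv : T.anc k v) (hd : T.depth k ≤ T.depth v) :
    v = k := by
  obtain ⟨t, rfl⟩ := hkv
  cases t with
  | zero => rfl
  | succ t =>
    by_cases hk : k = T.root
    · subst hk; exact Function.iterate_fixed T.parent_root _
    · have := T.depth_parent k hk
      have := T.depth_iterate_parent_le t (T.parent k)
      rw [Function.iterate_succ_apply] at hd
      omega

lemma anc_of_anc_of_depth_le {i k v : Fin N} (hk : T.anc i k) (hv : T.anc i v)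
    (hd : T.depth k ≤ T.depth v) : T.anc v k := by
  rcases T.anc_total hk hv with hkv | hvk
  · rw [T.eq_of_anc_of_depth_le hkv hd]; exact T.anc_refl k
  · exact hvk

lemma exists_separated_pair {ι : Type*} (ℓ : ι → Fin N) (S D : ι → Prop)
    (hS : ∃ s, S s) (hD : ∃ d, D d) :
    ∃ s d, S s ∧ D d ∧
      (∀ k, T.anc (ℓ s) k → ¬ T.anc (ℓ d) k → ∀ x, D x → ¬ T.anc (ℓ x) k) ∧
      (∀ k, T.anc (ℓ d) k → ¬ T.anc (ℓ s) k → ∀ x, S x → ¬ T.anc (ℓ x) k) := by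
  classical
  let V : Finset (Fin N) :=
    {u | (∃ s, S s ∧ T.anc (ℓ s) u) ∧ ∃ d, D d ∧ T.anc (ℓ d) u}
  obtain ⟨s₀, hs₀⟩ := hS
  obtain ⟨d₀, hd₀⟩ := hD
  obtain ⟨v, hv, hmax⟩ := V.exists_max_image T.depth
    ⟨T.root, by simpa [V] using ⟨⟨s₀, hs₀, T.anc_root _⟩, ⟨d₀, hd₀, T.anc_root _⟩⟩⟩
  obtain ⟨⟨s, hs, hsv⟩, ⟨d, hd, hdv⟩⟩ := by simpa [V] using hv
  have below_v : ∀ k x, T.anc x k → T.anc x v → k ∈ V → T.anc v k :=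
    fun k x hk hxv hkV => T.anc_of_anc_of_depth_le hk hxv (hmax k hkV)
  refine ⟨s, d, hs, hd, fun k hsk hdk x hx hxk => ?_, fun k hdk hsk x hx hxk => ?_⟩
  · refine hdk (T.anc_trans hdv (below_v k _ hsk hsv ?_))
    simpa [V] using ⟨⟨s, hs, hsk⟩, ⟨x, hx, hxk⟩⟩
  · refine hsk (T.anc_trans hsv (below_v k _ hdk hdv ?_))
    simpa [V] using ⟨⟨x, hx, hxk⟩, ⟨d, hd, hdk⟩⟩

variable {L : ℕ} (ℓ : Fin L → Fin N)

noncomputable def treeWasserstein (a b : Fin L → ℝ) : ℝ :=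
  ∑ k, T.w k * |T.mass ℓ a k - T.mass ℓ b k|

lemma treeWasserstein_self (a : Fin L → ℝ) : T.treeWasserstein ℓ a a = 0 := by
  simp [treeWasserstein]

lemma dist_self (i : Fin N) : T.dist i i = 0 := by
  simp [dist]

lemma dist_eq_sum_abs_bvec (i j : Fin N) :
    T.dist i j = ∑ k, T.w k * |T.bvec i k - T.bvec j k| := by
  refine Finset.sum_congr rfl fun k _ => ?_
  by_cases hi : T.anc i k <;> by_cases hj : T.anc j k <;> simp [bvec, hi, hj]

lemma mass_eq_sum_mul_bvec (a : Fin L → ℝ) (k : Fin N) :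
    T.mass ℓ a k = ∑ p, a p * T.bvec (ℓ p) k := by
  refine Finset.sum_congr rfl fun p _ => ?_
  by_cases h : T.anc (ℓ p) k <;> simp [bvec, h]

lemma mass_sub_single (a : Fin L → ℝ) (i : Fin L) (δ : ℝ) (k : Fin N) :
    T.mass ℓ (a - Pi.single i δ) k = T.mass ℓ a k - δ * T.bvec (ℓ i) k := by
  simp [mass_eq_sum_mul_bvec, sub_mul, Finset.sum_sub_distrib, Pi.single_apply]

lemma treeWasserstein_le_otCost {π : Fin L → Fin L → ℝ} {a b : Fin L → ℝ}
    (h : IsCoupling π a b) :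
    T.treeWasserstein ℓ a b ≤ otCost π (fun p q => T.dist (ℓ p) (ℓ q)) := by
  calc T.treeWasserstein ℓ a b
      ≤ ∑ k, T.w k * otCost π (fun p q => |T.bvec (ℓ p) k - T.bvec (ℓ q) k|) := by
        refine Finset.sum_le_sum fun k _ => mul_le_mul_of_nonneg_left ?_ (T.hw k)
        simpa only [mass_eq_sum_mul_bvec] using abs_sum_sub_sum_le_otCost h _ _
    _ = otCost π (fun p q => T.dist (ℓ p) (ℓ q)) := by
        simp only [otCost, dist_eq_sum_abs_bvec, Finset.mul_sum]
        rw [Finset.sum_comm]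
        refine Finset.sum_congr rfl fun p _ => ?_
        rw [Finset.sum_comm]
        refine Finset.sum_congr rfl fun q _ => Finset.sum_congr rfl fun k _ => ?_
        ring

lemma sub_le_mass_sub_mass {a b : Fin L → ℝ} {i : Fin L} {k : Fin N}
    (hle : ∀ l, T.anc (ℓ l) k → b l ≤ a l) (hi : T.anc (ℓ i) k) :
    a i - b i ≤ T.mass ℓ a k - T.mass ℓ b k := by
  have hterm : ∀ l, 0 ≤ (a l - b l) * T.bvec (ℓ l) k := fun l => by
    by_cases hl : T.anc (ℓ l) k <;> simp [bvec, hl, hle]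
  calc a i - b i = (a i - b i) * T.bvec (ℓ i) k := by simp [bvec, hi]
    _ ≤ ∑ l, (a l - b l) * T.bvec (ℓ l) k :=
        Finset.single_le_sum (fun l _ => hterm l) (Finset.mem_univ i)
    _ = T.mass ℓ a k - T.mass ℓ b k := by
        simp only [mass_eq_sum_mul_bvec, sub_mul, Finset.sum_sub_distrib]

lemma treeWasserstein_sub_single {a b : Fin L → ℝ} {i j : Fin L} {δ : ℝ}
    (hi : ∀ k, T.anc (ℓ i) k → ¬ T.anc (ℓ j) k → ∀ l, T.anc (ℓ l) k → b l ≤ a l)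
    (hj : ∀ k, T.anc (ℓ j) k → ¬ T.anc (ℓ i) k → ∀ l, T.anc (ℓ l) k → a l ≤ b l)
    (hδi : δ ≤ a i - b i) (hδj : δ ≤ b j - a j) :
    T.treeWasserstein ℓ (a - Pi.single i δ) (b - Pi.single j δ) =
      T.treeWasserstein ℓ a b - δ * T.dist (ℓ i) (ℓ j) := by
  simp only [treeWasserstein, mass_sub_single, dist_eq_sum_abs_bvec, Finset.mul_sum,
    ← Finset.sum_sub_distrib]
  refine Finset.sum_congr rfl fun k _ => ?_
  by_cases hik : T.anc (ℓ i) k <;> by_cases hjk : T.anc (ℓ j) k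
  · simp [bvec, hik, hjk]
  · have := T.sub_le_mass_sub_mass ℓ (hi k hik hjk) hik
    have := hi k hik hjk i hik
    simp only [bvec, hik, hjk, if_true, if_false, mul_one, mul_zero, sub_zero, abs_one]
    rw [abs_of_nonneg (by linarith), abs_of_nonneg (by linarith)]
    ring
  · have := T.sub_le_mass_sub_mass ℓ (hj k hjk hik) hjk
    have := hj k hjk hik j hjk
    simp only [bvec, hik, hjk, if_true, if_false, mul_one, mul_zero, sub_zero, zero_sub,
      abs_neg, abs_one]
    rw [abs_of_nonpos (by linarith), abs_of_nonpos (by linarith)]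
    ring
  · simp [bvec, hik, hjk]

lemma exists_pair_treeWasserstein_sub_single {a b : Fin L → ℝ}
    (hsurplus : ∃ i, b i < a i) (hdeficit : ∃ j, a j < b j) :
    ∃ i j, b i < a i ∧ a j < b j ∧ ∀ δ ≤ a i - b i, δ ≤ b j - a j →
      T.treeWasserstein ℓ (a - Pi.single i δ) (b - Pi.single j δ) =
        T.treeWasserstein ℓ a b - δ * T.dist (ℓ i) (ℓ j) := by
  obtain ⟨i, j, hi, hj, hsep_i, hsep_j⟩ :=
    T.exists_separated_pair ℓ (fun l => b l < a l) (fun l => a l < b l) hsurplus hdeficit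
  refine ⟨i, j, hi, hj, fun δ hδi hδj => T.treeWasserstein_sub_single ℓ ?_ ?_ hδi hδj⟩
  · exact fun k hik hjk l hl => not_lt.1 fun hlt => hsep_i k hik hjk l hlt hl
  · exact fun k hjk hik l hl => not_lt.1 fun hlt => hsep_j k hjk hik l hlt hl

end WTree

theorem stmt5_general {N L : ℕ} (T : WTree N) (ℓ : Fin L → Fin N)
    (a b : Fin L → ℝ) (ha : IsProbVec a) (hb : IsProbVec b) :
    ∑ k, T.w k * |T.mass ℓ a k - T.mass ℓ b k|
      = sInf {c : ℝ | ∃ π, IsCoupling π a b ∧ c = otCost π (fun i j => T.dist (ℓ i) (ℓ j))} := by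
  obtain ⟨π, hπ, hcost⟩ := exists_isCoupling_otCost_eq (fun p => T.dist_self (ℓ p))
    (T.treeWasserstein_self ℓ) (fun _ _ => T.exists_pair_treeWasserstein_sub_single ℓ)
    ha.1 hb.1 (ha.2.trans hb.2.symm)
  refine (IsLeast.csInf_eq ⟨?_, ?_⟩).symm
  · exact ⟨π, hπ, hcost.symm⟩
  · rintro _ ⟨π', hπ', rfl⟩
    exact T.treeWasserstein_le_otCost ℓ hπ'

/-- Proposition 2: the closed-form quantity Σ_e w_e |μ(Γ(v_e)) − ν(Γ(v_e))| equals
the optimal transport cost with the tree shortest-path metric as ground cost. -/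
theorem stmt5 {N L : ℕ} (T : WTree N) (ℓ : Fin L → Fin N)
    (hinj : Function.Injective ℓ) (hleaf : ∀ i, T.IsLeaf (ℓ i))
    (a b : Fin L → ℝ) (ha : IsProbVec a) (hb : IsProbVec b) :
    ∑ k, T.w k * |T.mass ℓ a k - T.mass ℓ b k|
      = sInf {c : ℝ | ∃ π, IsCoupling π a b ∧ c = otCost π (fun i j => T.dist (ℓ i) (ℓ j))} :=
  stmt5_general T ℓ a b ha hb
end

section
/- Let Π be a coupling whose support, viewed as a bipartite-style undirected graph on the index set with an edge between p and q whenever π_{pq} > 0, contains a cycle i₁, i₂, …, i_{2n}, i_{2n+1} = i₁ with π_{i₁ i₂} > 0, π_{i₃ i₂} > 0, π_{i₃ i₄} > 0, …, π_{i₁ i_{2n}} > 0. Then there exists a coupling Π' with the same marginals, transport cost (with respect to any cost function) at most that of Π or at most that of Π (one of the two cyclic shift directions achieves this), and strictly fewer nonzero entries. -/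
open Finset

theorem Finset.card_filter_ne_zero_lt {α M : Type*} [Fintype α] [Zero M] [DecidableEq M]
    {f g : α → M} (hsupp : ∀ x, f x = 0 → g x = 0) {x₀ : α} (hf : f x₀ ≠ 0) (hg : g x₀ = 0) :
    #{x | g x ≠ 0} < #{x | f x ≠ 0} := by
  refine card_lt_card ⟨fun x hx => ?_, fun h => ?_⟩
  · simp only [mem_filter, mem_univ, true_and] at hx ⊢
    exact fun hfx => hx (hsupp x hfx)
  · exact (by simpa using h (by simpa using hf) : g x₀ ≠ 0) hg

section Perturbation

variable {n m : ℕ} {π F : Fin n → Fin m → ℝ} {a : Fin n → ℝ} {b : Fin m → ℝ}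

theorem IsCoupling.add_mul {t : ℝ} (hπ : IsCoupling π a b) (hrow : ∀ i, ∑ j, F i j = 0)
    (hcol : ∀ j, ∑ i, F i j = 0) (hnonneg : ∀ i j, 0 ≤ π i j + t * F i j) :
    IsCoupling (fun i j => π i j + t * F i j) a b := by
  refine ⟨hnonneg, fun i => ?_, fun j => ?_⟩
  · rw [sum_add_distrib, ← mul_sum, hrow, mul_zero, add_zero, hπ.2.1]
  · rw [sum_add_distrib, ← mul_sum, hcol, mul_zero, add_zero, hπ.2.2]

theorem otCost_add_mul (π F C : Fin n → Fin m → ℝ) (t : ℝ) :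
    otCost (fun i j => π i j + t * F i j) C = otCost π C + t * otCost F C := by
  simp only [otCost, mul_sum, ← sum_add_distrib]
  exact sum_congr rfl fun i _ => sum_congr rfl fun j _ => by ring

theorem IsCoupling.exists_sparser_of_balanced (hπ : IsCoupling π a b)
    (hrow : ∀ i, ∑ j, F i j = 0) (hcol : ∀ j, ∑ i, F i j = 0)
    (hsupp : ∀ i j, π i j = 0 → F i j = 0) {t : ℝ} (hnonneg : ∀ i j, 0 ≤ π i j + t * F i j)
    {i₀ : Fin n} {j₀ : Fin m} (hne : π i₀ j₀ ≠ 0) (hzero : π i₀ j₀ + t * F i₀ j₀ = 0)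
    (C : Fin n → Fin m → ℝ) (hcost : t * otCost F C ≤ 0) :
    ∃ π' : Fin n → Fin m → ℝ, IsCoupling π' a b ∧ otCost π' C ≤ otCost π C ∧
      #{pq : Fin n × Fin m | π' pq.1 pq.2 ≠ 0} < #{pq : Fin n × Fin m | π pq.1 pq.2 ≠ 0} := by
  refine ⟨_, hπ.add_mul hrow hcol hnonneg, ?_, ?_⟩
  · rw [otCost_add_mul]
    linarith
  · refine card_filter_ne_zero_lt (fun pq h => ?_) (x₀ := (i₀, j₀)) hne hzero
    simp [h, hsupp _ _ h]

end Perturbation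

section Cycle

variable {nr nc m : ℕ} [NeZero m] (r : Fin m → Fin nr) (c : Fin m → Fin nc)

noncomputable def cycleDir (i : Fin nr) (j : Fin nc) : ℝ :=
  ∑ k, ((if i = r k ∧ j = c k then 1 else 0) - (if i = r (k + 1) ∧ j = c k then 1 else 0))

theorem cycleDir_row_sum (i : Fin nr) : ∑ j, cycleDir r c i j = 0 := by
  have hshift : ∑ k, (if i = r (k + 1) then (1 : ℝ) else 0) = ∑ k, if i = r k then 1 else 0 :=
    Fintype.sum_equiv (Equiv.addRight 1) _ _ fun k => rfl
  simp only [cycleDir]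
  rw [sum_comm]
  simp [sum_sub_distrib, ite_and, hshift]

theorem cycleDir_col_sum (j : Fin nc) : ∑ i, cycleDir r c i j = 0 := by
  simp only [cycleDir]
  rw [sum_comm]
  simp [sum_sub_distrib, ite_and]

theorem cycleDir_of_forall_ne {i : Fin nr} {j : Fin nc} (hj : ∀ k, j ≠ c k) :
    cycleDir r c i j = 0 := by
  simp [cycleDir, hj]

variable {r c}

theorem cycleDir_apply_col (hc : Function.Injective c) (i : Fin nr) (k : Fin m) :
    cycleDir r c i (c k) = (if i = r k then 1 else 0) - (if i = r (k + 1) then 1 else 0) := by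
  simp [cycleDir, hc.eq_iff, and_comm (a := i = _), ite_and]

theorem cycleDir_fwd (hc : Function.Injective c) (hr : ∀ k, r (k + 1) ≠ r k) (k : Fin m) :
    cycleDir r c (r k) (c k) = 1 := by
  simp [cycleDir_apply_col hc, (hr k).symm]

theorem cycleDir_bwd (hc : Function.Injective c) (hr : ∀ k, r (k + 1) ≠ r k) (k : Fin m) :
    cycleDir r c (r (k + 1)) (c k) = -1 := by
  simp [cycleDir_apply_col hc, hr k]

theorem cycleDir_eq_zero_of_eq_zero (hc : Function.Injective c) {π : Fin nr → Fin nc → ℝ}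
    (h1 : ∀ k, π (r k) (c k) ≠ 0) (h2 : ∀ k, π (r (k + 1)) (c k) ≠ 0) {i : Fin nr} {j : Fin nc}
    (h0 : π i j = 0) : cycleDir r c i j = 0 := by
  by_cases hj : ∃ k, j = c k
  · obtain ⟨k, rfl⟩ := hj
    have hfwd : i ≠ r k := by rintro rfl; exact h1 k h0
    have hbwd : i ≠ r (k + 1) := by rintro rfl; exact h2 k h0
    simp [cycleDir_apply_col hc, hfwd, hbwd]
  · exact cycleDir_of_forall_ne r c (not_exists.1 hj)

theorem add_mul_cycleDir_nonneg (hc : Function.Injective c) {π : Fin nr → Fin nc → ℝ}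
    (hπ : ∀ i j, 0 ≤ π i j) {t : ℝ} (h1 : ∀ k, -t ≤ π (r k) (c k))
    (h2 : ∀ k, t ≤ π (r (k + 1)) (c k)) (i : Fin nr) (j : Fin nc) :
    0 ≤ π i j + t * cycleDir r c i j := by
  by_cases hj : ∃ k, j = c k
  · obtain ⟨k, rfl⟩ := hj
    rw [cycleDir_apply_col hc]
    have hnonneg := hπ i (c k)
    split_ifs with hfwd hbwd hbwd
    · simpa using hnonneg
    · subst hfwd; linarith [h1 k]
    · subst hbwd; linarith [h2 k]
    · simpa using hnonneg
  · simpa [cycleDir_of_forall_ne r c (not_exists.1 hj)] using hπ i j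

end Cycle

/-- Cycle cancelling: if the support of a coupling contains a cycle
(r 0, c 0), (r 1, c 0), (r 1, c 1), …, (r 0, c (n-1)) of positive entries, then there
is a coupling with the same marginals, no larger cost, and strictly fewer nonzero
entries. -/
theorem stmt8 {nr nc : ℕ} (a : Fin nr → ℝ) (b : Fin nc → ℝ)
    (π : Fin nr → Fin nc → ℝ) (hπ : IsCoupling π a b)
    (C : Fin nr → Fin nc → ℝ)
    {n : ℕ} (r : Fin (n + 2) → Fin nr) (c : Fin (n + 2) → Fin nc)
    (hr : Function.Injective r) (hc : Function.Injective c)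
    (h1 : ∀ k, 0 < π (r k) (c k)) (h2 : ∀ k, 0 < π (r (k + 1)) (c k)) :
    ∃ π' : Fin nr → Fin nc → ℝ,
      IsCoupling π' a b ∧
      otCost π' C ≤ otCost π C ∧
      (Finset.univ.filter (fun pq : Fin nr × Fin nc => π' pq.1 pq.2 ≠ 0)).card
        < (Finset.univ.filter (fun pq : Fin nr × Fin nc => π pq.1 pq.2 ≠ 0)).card := by
  have hr' : ∀ k, r (k + 1) ≠ r k := fun k h => by simpa using hr h
  obtain ⟨k₁, hk₁⟩ := Finite.exists_min fun k => π (r k) (c k)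
  obtain ⟨k₂, hk₂⟩ := Finite.exists_min fun k => π (r (k + 1)) (c k)
  have hsupp : ∀ i j, π i j = 0 → cycleDir r c i j = 0 := fun i j =>
    cycleDir_eq_zero_of_eq_zero hc (fun k => (h1 k).ne') (fun k => (h2 k).ne')
  have hrow := cycleDir_row_sum r c
  have hcol := cycleDir_col_sum r c
  rcases le_or_gt (otCost (cycleDir r c) C) 0 with hD | hD
  · exact hπ.exists_sparser_of_balanced hrow hcol hsupp
      (add_mul_cycleDir_nonneg hc hπ.1 (fun k => by linarith [h1 k, h2 k₂]) hk₂)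
      (h2 k₂).ne' (by simp [cycleDir_bwd hc hr']) C
      (mul_nonpos_of_nonneg_of_nonpos (h2 k₂).le hD)
  · exact hπ.exists_sparser_of_balanced hrow hcol hsupp
      (add_mul_cycleDir_nonneg (t := -π (r k₁) (c k₁)) hc hπ.1 (by simpa using hk₁)
        fun k => by linarith [h1 k₁, h2 k])
      (h1 k₁).ne' (by simp [cycleDir_fwd hc hr']) C
      (mul_nonpos_of_nonpos_of_nonneg (neg_nonpos.2 (h1 k₁).le) hD.le)
end
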